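/- arXiv:1609.06396 — 2 statements merged into one kernel-verified Lean document; each statement's English description precedes it below -/
import Mathlib

section
/- Let A be a commutative ring, R_{n−1} = A[x_1,...,x_{n−1}] ⊂ R_n = A[x_1,...,x_n]. For 2 ≤ d ≤ n, the ideal I_{d,n} of R_n satisfies I_{d,n} = I_{d,n−1}·R_n + x_n·(I_{d−1,n−1}·R_n), where I_{d,m} denotes the ideal of squarefree monomials of degree d in the first m variables. -/
/-
A squarefree monomial `∏_{j ∈ s} x_j` of `R_{m+1}` is either the image of one of `R_m`
(when `x_{m+1} ∉ s`) or `x_{m+1}` times the image of one of degree one less; conversely both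
kinds are squarefree monomials of `R_{m+1}`. Comparing generators gives the two inclusions.
-/

open MvPolynomial

/-- The ideal of `A[x_1, …, x_m]` generated by all squarefree monomials of degree `d`. -/
noncomputable def squarefreeIdeal (A : Type*) [CommRing A] (m d : ℕ) :
    Ideal (MvPolynomial (Fin m) A) :=
  Ideal.span {f | ∃ s : Finset (Fin m), s.card = d ∧ f = ∏ j ∈ s, X j}

theorem MvPolynomial.rename_prod_X {R σ τ : Type*} [CommSemiring R] (f : σ ↪ τ)
    (t : Finset σ) : rename (R := R) f (∏ j ∈ t, X j) = ∏ j ∈ t.map f, X j := by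
  simp [map_prod, Finset.prod_map]

theorem Fin.exists_map_castSuccEmb_eq {m : ℕ} {s : Finset (Fin (m + 1))}
    (h : Fin.last m ∉ s) : ∃ t : Finset (Fin m), t.map Fin.castSuccEmb = s := by
  have hs : s ⊆ Finset.univ.map Fin.castSuccEmb := by
    rw [← Fin.Iio_last_eq_map]
    intro i hi
    rw [Finset.mem_Iio, Fin.lt_last_iff_ne_last]
    exact ne_of_mem_of_not_mem hi h
  obtain ⟨t, -, rfl⟩ := Finset.subset_map_iff.mp hs
  exact ⟨t, rfl⟩

theorem Fin.last_notMem_map_castSuccEmb {m : ℕ} (t : Finset (Fin m)) :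
    Fin.last m ∉ t.map Fin.castSuccEmb := by
  simp [Fin.castSucc_ne_last]

section

variable {A : Type*} [CommRing A] {m n d : ℕ}

theorem prod_X_mem_squarefreeIdeal {s : Finset (Fin m)} (hs : s.card = d) :
    ∏ j ∈ s, X j ∈ squarefreeIdeal A m d :=
  Ideal.subset_span ⟨s, hs, rfl⟩

theorem map_rename_squarefreeIdeal_le (f : Fin m ↪ Fin n) :
    (squarefreeIdeal A m d).map (rename f) ≤ squarefreeIdeal A n d := by
  rw [squarefreeIdeal, Ideal.map_span, Ideal.span_le]
  rintro _ ⟨_, ⟨t, rfl, rfl⟩, rfl⟩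
  rw [rename_prod_X]
  exact prod_X_mem_squarefreeIdeal (Finset.card_map f)

theorem span_X_last_mul_map_squarefreeIdeal_le :
    Ideal.span {X (Fin.last m)} * (squarefreeIdeal A m d).map (rename Fin.castSucc) ≤
      squarefreeIdeal A (m + 1) (d + 1) := by
  rw [squarefreeIdeal, Ideal.map_span, Ideal.span_mul_span', Ideal.span_le]
  rintro _ ⟨_, rfl, _, ⟨_, ⟨t, rfl, rfl⟩, rfl⟩, rfl⟩
  dsimp only
  rw [← Fin.coe_castSuccEmb, rename_prod_X,
    ← Finset.prod_insert (Fin.last_notMem_map_castSuccEmb t)]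
  refine prod_X_mem_squarefreeIdeal ?_
  rw [Finset.card_insert_of_notMem (Fin.last_notMem_map_castSuccEmb t), Finset.card_map]

theorem squarefreeIdeal_succ_le_sup :
    squarefreeIdeal A (m + 1) (d + 1) ≤
      (squarefreeIdeal A m (d + 1)).map (rename Fin.castSucc) ⊔
        Ideal.span {X (Fin.last m)} * (squarefreeIdeal A m d).map (rename Fin.castSucc) := by
  rw [squarefreeIdeal, Ideal.span_le]
  rintro _ ⟨s, hs, rfl⟩
  by_cases hlast : Fin.last m ∈ s
  · obtain ⟨t, ht⟩ := Fin.exists_map_castSuccEmb_eq (Finset.notMem_erase (Fin.last m) s)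
    have htd : t.card = d := by
      rw [← Finset.card_map Fin.castSuccEmb, ht, Finset.card_erase_of_mem hlast, hs]
      rfl
    rw [← Finset.mul_prod_erase s X hlast, ← ht, ← rename_prod_X, Fin.coe_castSuccEmb]
    exact Ideal.mem_sup_right (Ideal.mul_mem_mul (Ideal.mem_span_singleton_self _)
      (Ideal.mem_map_of_mem _ (prod_X_mem_squarefreeIdeal htd)))
  · obtain ⟨t, rfl⟩ := Fin.exists_map_castSuccEmb_eq hlast
    rw [← rename_prod_X, Fin.coe_castSuccEmb]
    exact Ideal.mem_sup_left (Ideal.mem_map_of_mem _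
      (prod_X_mem_squarefreeIdeal ((Finset.card_map _).symm.trans hs)))

end

theorem squarefreeIdeal_decomposition_general (A : Type*) [CommRing A] (m d : ℕ)
    (hd : 2 ≤ d) :
    squarefreeIdeal A (m + 1) d =
      Ideal.map (MvPolynomial.rename (Fin.castSucc : Fin m → Fin (m + 1)))
          (squarefreeIdeal A m d) ⊔
        Ideal.span {X (Fin.last m)} *
          Ideal.map (MvPolynomial.rename (Fin.castSucc : Fin m → Fin (m + 1)))
            (squarefreeIdeal A m (d - 1)) := by
  obtain ⟨k, rfl⟩ : ∃ k, d = k + 1 := ⟨d - 1, by omega⟩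
  refine le_antisymm squarefreeIdeal_succ_le_sup
    (sup_le ?_ span_X_last_mul_map_squarefreeIdeal_le)
  exact map_rename_squarefreeIdeal_le Fin.castSuccEmb

/-- For `2 ≤ d ≤ n` (here `n = m + 1`), the ideal `I_{d,n}` of `R_n = A[x_1, …, x_n]`
satisfies `I_{d,n} = I_{d,n−1}·R_n + x_n·(I_{d−1,n−1}·R_n)`, where the ideals on the
right are extended along the inclusion `R_{n−1} ⊆ R_n`. -/
theorem squarefreeIdeal_decomposition (A : Type*) [CommRing A] (m d : ℕ)
    (hd : 2 ≤ d) (hdn : d ≤ m + 1) :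
    squarefreeIdeal A (m + 1) d =
      Ideal.map (MvPolynomial.rename (Fin.castSucc : Fin m → Fin (m + 1)))
          (squarefreeIdeal A m d) ⊔
        Ideal.span {X (Fin.last m)} *
          Ideal.map (MvPolynomial.rename (Fin.castSucc : Fin m → Fin (m + 1)))
            (squarefreeIdeal A m (d - 1)) :=
  squarefreeIdeal_decomposition_general A m d hd
end

section
/- For 1 ≤ d ≤ n and 1 ≤ i ≤ n−d, define the map ∂ on basis tableaux of shape (d,1^i) by ∂([T]) = Σ_{j=0}^{i} (−1)^{i−j} x_{a_j} [T \ a_j], where a_0,...,a_i are the entries of the first column of T from top to bottom and T \ a_j removes the box containing a_j from the first column (sliding lower boxes up). Then ∂∘∂ = 0, i.e., these maps form a complex. -/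
open MvPolynomial

variable (A : Type) [CommRing A]

/-- Free `R`-module on tableaux of shape `(d, 1^{c-1})` with entries in `[n]`: a tableau
is recorded as its first column (of length `c`, top to bottom) together with the rest of
its first row (of length `d-1`, left to right). -/
def TabMod (n d c : ℕ) : Type :=
  ((Fin c → Fin n) × (Fin (d - 1) → Fin n)) →₀ MvPolynomial (Fin n) A

noncomputable instance (n d c : ℕ) : AddCommGroup (TabMod A n d c) :=
  inferInstanceAs (AddCommGroup (_ →₀ _))

noncomputable instance (n d c : ℕ) :
    Module (MvPolynomial (Fin n) A) (TabMod A n d c) :=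
  inferInstanceAs (Module _ (_ →₀ _))

/-- The differential `∂_{i+1} : F_{i+1} → F_i`, sending a tableau `T` with first column
`a_0, …, a_{i+1}` to `Σ_{j=0}^{i+1} (−1)^{i+1−j} x_{a_j} [T \ a_j]`. -/
noncomputable def tabDiff (n d i : ℕ) :
    TabMod A n d (i + 2) →ₗ[MvPolynomial (Fin n) A] TabMod A n d (i + 1) :=
  Finsupp.lsum (MvPolynomial (Fin n) A) fun T =>
    LinearMap.toSpanSingleton (MvPolynomial (Fin n) A) _
      (∑ j : Fin (i + 2),
        ((-1 : MvPolynomial (Fin n) A) ^ (i + 1 - (j : ℕ)) * X (T.1 j)) •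
          Finsupp.single (j.removeNth T.1, T.2) (1 : MvPolynomial (Fin n) A))

/-! In `∂ (∂ [T])` each term removes two boxes of the first column, one after the other.
Removing the same two boxes in the opposite order gives the same tableau and the same monomial,
but the positions of the two boxes shift by one against each other, so the sign flips and the
terms cancel in pairs. -/

/-- Removing the entries at `j` and then at `k` is the same as removing them in the other
order; this involution records the indices of that other order. -/
def swapRemovals (m : ℕ) (p : Fin (m + 2) × Fin (m + 1)) : Fin (m + 2) × Fin (m + 1) :=
  (p.1.succAbove p.2, p.2.predAbove p.1)

lemma swapRemovals_involutive (m : ℕ) : Function.Involutive (swapRemovals m) := fun p =>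
  Prod.ext (Fin.succAbove_succAbove_predAbove p.1 p.2) (Fin.predAbove_predAbove_succAbove p.1 p.2)

lemma swapRemovals_ne (m : ℕ) (p : Fin (m + 2) × Fin (m + 1)) : swapRemovals m p ≠ p :=
  fun h => Fin.succAbove_ne p.1 p.2 (congrArg Prod.fst h)

lemma neg_one_pow_swapRemovals {R : Type*} [Monoid R] [HasDistribNeg R] (m : ℕ)
    (p : Fin (m + 2) × Fin (m + 1)) :
    (-1 : R) ^ (m + 1 - ((swapRemovals m p).1 : ℕ)) * (-1) ^ (m - ((swapRemovals m p).2 : ℕ)) =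
      -((-1) ^ (m + 1 - (p.1 : ℕ)) * (-1) ^ (m - (p.2 : ℕ))) := by
  obtain ⟨j, k⟩ := p
  rw [← pow_add, ← pow_add]
  obtain h | h :
      (m + 1 - ((swapRemovals m (j, k)).1 : ℕ)) + (m - ((swapRemovals m (j, k)).2 : ℕ)) + 1 =
        (m + 1 - (j : ℕ)) + (m - (k : ℕ)) ∨
      (m + 1 - (j : ℕ)) + (m - (k : ℕ)) + 1 =
        (m + 1 - ((swapRemovals m (j, k)).1 : ℕ)) + (m - ((swapRemovals m (j, k)).2 : ℕ)) := by
    simp only [swapRemovals, Fin.succAbove, Fin.predAbove, Fin.lt_def, Fin.val_castSucc,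
      apply_dite Fin.val, Fin.val_pred, Fin.coe_castPred, dite_eq_ite, apply_ite Fin.val,
      Fin.val_succ]
    split_ifs <;> lia
  · rw [← h, pow_succ, mul_neg_one, neg_neg]
  · rw [← h, pow_succ, mul_neg_one]

lemma sum_smul_sum_smul_removeNth_removeNth_eq_zero {R M α : Type*} [CommRing R] [AddCommGroup M]
    [Module R M] (m : ℕ) (x : α → R) (g : (Fin m → α) → M) (a : Fin (m + 2) → α) :
    ∑ j : Fin (m + 2), ((-1 : R) ^ (m + 1 - (j : ℕ)) * x (a j)) •
      ∑ k : Fin (m + 1), ((-1 : R) ^ (m - (k : ℕ)) * x (j.removeNth a k)) •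
        g (k.removeNth (j.removeNth a)) = 0 := by
  simp only [Finset.smul_sum, smul_smul, ← Finset.sum_product', Finset.univ_product_univ]
  refine Finset.sum_ninvolution (swapRemovals m) (fun p => ?_) (fun p _ => swapRemovals_ne m p)
    (fun _ => Finset.mem_univ _) (swapRemovals_involutive m)
  obtain ⟨j, k⟩ := p
  have hsign := neg_one_pow_swapRemovals (R := R) m (j, k)
  simp only [swapRemovals, Fin.removeNth_apply, Fin.succAbove_succAbove_predAbove] at hsign ⊢
  rw [← Fin.removeNth_removeNth_eq_swap, ← add_smul]
  convert zero_smul R _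
  linear_combination x (a (j.succAbove k)) * x (a j) * hsign

/-- Typed as `TabMod`, so that sums of basis tableaux are formed there rather than in the
underlying `Finsupp` type, and `tabDiff` can then be rewritten through them. -/
noncomputable def TabMod.single {n d c : ℕ} (T : (Fin c → Fin n) × (Fin (d - 1) → Fin n))
    (r : MvPolynomial (Fin n) A) : TabMod A n d c :=
  Finsupp.single T r

lemma tabDiff_single (n d i : ℕ) (T : (Fin (i + 2) → Fin n) × (Fin (d - 1) → Fin n))
    (b : MvPolynomial (Fin n) A) :
    tabDiff A n d i (TabMod.single A T b) =
      b • ∑ j : Fin (i + 2), ((-1 : MvPolynomial (Fin n) A) ^ (i + 1 - (j : ℕ)) * X (T.1 j)) •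
        TabMod.single A (j.removeNth T.1, T.2) 1 :=
  Finsupp.lsum_single _ _ _ _

theorem tabDiff_comp_tabDiff (n d i : ℕ) :
    (tabDiff A n d i).comp (tabDiff A n d (i + 1)) = 0 := by
  refine Finsupp.lhom_ext fun T b => ?_
  change tabDiff A n d i (tabDiff A n d (i + 1) (TabMod.single A T b)) = 0
  simp only [tabDiff_single, map_smul, map_sum, one_smul]
  rw [sum_smul_sum_smul_removeNth_removeNth_eq_zero (i + 1) X
    (fun c => TabMod.single A (c, T.2) 1) T.1, smul_zero]
end
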